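/- Let n ≥ m ≥ k ≥ 1 be integers and let B be an m×n complex matrix satisfying B B* = I_m. Then for every real ε > 0, the sum over all k-element subsets s of {1,…,n} of det(ε·I_k + B_s* B_s) is at least C(m,k) and at most C(m,k)·(1+√ε)^{n+k}. -/

import Mathlib

open Matrix Finset

/-- The `m × k` submatrix of an `m × n` matrix `B` consisting of the columns of `B`
indexed by the subset `s`. -/
def colSubmatrix {m n : ℕ} (B : Matrix (Fin m) (Fin n) ℂ) (s : Finset (Fin n)) :
    Matrix (Fin m) {j // j ∈ s} ℂ :=
  Matrix.of fun i j => B i (j : Fin n)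

/-! Since `B Bᴴ = 1`, the determinant `det (ε + Bₛᴴ Bₛ)` is the principal minor on `s` of
`ε + Bᴴ B`. Expanding it in principal minors of `Bᴴ B`, every `j`-set of columns lies in
`C(n-j, k-j)` of the `k`-sets `s`, and the `j × j` principal minors of `Bᴴ B` add up to the
coefficient of `X^j` in `det (1 + X Bᴴ B) = det (1 + X B Bᴴ) = (1 + X)^m`, namely `C(m, j)`.
So the sum is `∑_{j ≤ k} ε^(k-j) C(n-j, k-j) C(m, j)`. Its term `j = k` is `C(m, k)`; and
`C(m, j) ≤ C(m, k) C(k, j)`, `C(n-j, k-j) ≤ C(n, k-j)` bound the sum by `C(m, k)` times the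
diagonal part of the product of the binomial expansions of `(1 + √ε)^k` and `(1 + √ε)^n`. -/

theorem Finset.sum_powersetCard_powersetCard {α M : Type*} [Fintype α] [DecidableEq α]
    [AddCommMonoid M] (f : Finset α → M) {j k : ℕ} (hjk : j ≤ k) :
    ∑ s ∈ univ.powersetCard k, ∑ t ∈ s.powersetCard j, f t =
      (Fintype.card α - j).choose (k - j) • ∑ t ∈ univ.powersetCard j, f t := by
  rw [sum_comm' (t' := univ.powersetCard j)
    (s' := fun t => (univ.powersetCard k).filter (t ⊆ ·))]
  · rw [smul_sum]
    refine sum_congr rfl fun t ht => ?_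
    have htj : t.card = j := (mem_powersetCard.mp ht).2
    rw [sum_const, card_filter_powersetCard_subset _ _ _ (subset_univ _) (htj ▸ hjk),
      card_univ, htj]
  · intro s t
    simp only [mem_powersetCard, mem_filter, subset_univ, true_and]
    tauto

open Polynomial in
theorem Matrix.det_smul_one_add_eq_sum_principal_minors {R ι : Type*} [CommRing R] [Fintype ι]
    [DecidableEq ι] (c : R) (M : Matrix ι ι R) :
    (c • 1 + M).det = ∑ j ∈ range (Fintype.card ι + 1), c ^ (Fintype.card ι - j) *
      ∑ s ∈ univ.powersetCard j, (M.submatrix (Subtype.val : s → ι) Subtype.val).det := by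
  nontriviality R
  -- `det (c • 1 + M)` is the characteristic polynomial of `-M` evaluated at `c`.
  rw [← sub_neg_eq_add, smul_one_eq_diagonal, ← scalar_apply, ← eval_charpoly,
    eval_eq_sum_range, charpoly_natDegree_eq_dim, ← sum_range_reflect, Nat.add_sub_cancel]
  refine sum_congr rfl fun j hj => ?_
  have hjn : j ≤ Fintype.card ι := Nat.lt_succ_iff.mp (mem_range.mp hj)
  rw [charpoly_coeff_eq_sum_minors _ _ hjn, mul_comm, Finset.mul_sum]
  congr 1
  refine sum_congr rfl fun s hs => ?_
  rw [submatrix_neg, Pi.neg_apply, Pi.neg_apply, det_neg, Fintype.card_coe,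
    (mem_powersetCard.mp hs).2, ← mul_assoc, ← mul_pow, neg_one_mul, neg_neg, one_pow, one_mul]

theorem Matrix.sum_principal_minors_submatrix {R ι : Type*} [CommRing R] [DecidableEq ι]
    (G : Matrix ι ι R) (s : Finset ι) (j : ℕ) :
    ∑ u ∈ (univ : Finset s).powersetCard j,
        ((G.submatrix (Subtype.val : s → ι) Subtype.val).submatrix
          (Subtype.val : u → s) Subtype.val).det =
      ∑ t ∈ s.powersetCard j, (G.submatrix (Subtype.val : t → ι) Subtype.val).det := by
  set e := Function.Embedding.subtype (· ∈ s)
  have hs : (univ : Finset s).map e = s := by rw [univ_eq_attach]; exact attach_map_val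
  conv_rhs => rw [← hs, powersetCard_map, sum_map]
  exact sum_congr rfl fun u _ =>
    det_submatrix_equiv_self (R := R) (u.equivMap e) (G.submatrix Subtype.val Subtype.val)

theorem Matrix.sum_det_smul_one_add_principal_submatrix {R ι : Type*} [CommRing R] [Fintype ι]
    [DecidableEq ι] (c : R) (G : Matrix ι ι R) (k : ℕ) :
    ∑ s ∈ univ.powersetCard k, (c • 1 + G.submatrix (Subtype.val : s → ι) Subtype.val).det =
      ∑ j ∈ range (k + 1), c ^ (k - j) * (Fintype.card ι - j).choose (k - j) *
        ∑ t ∈ univ.powersetCard j, (G.submatrix (Subtype.val : t → ι) Subtype.val).det := by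
  calc ∑ s ∈ univ.powersetCard k, (c • 1 + G.submatrix (Subtype.val : s → ι) Subtype.val).det
      = ∑ s ∈ univ.powersetCard k, ∑ j ∈ range (k + 1), c ^ (k - j) *
          ∑ t ∈ s.powersetCard j, (G.submatrix (Subtype.val : t → ι) Subtype.val).det := by
        refine sum_congr rfl fun s hs => ?_
        rw [det_smul_one_add_eq_sum_principal_minors, Fintype.card_coe,
          (mem_powersetCard.mp hs).2]
        simp only [sum_principal_minors_submatrix]
    _ = _ := by
        rw [sum_comm]
        refine sum_congr rfl fun j hj => ?_
        rw [← mul_sum, sum_powersetCard_powersetCard _ (Nat.lt_succ_iff.mp (mem_range.mp hj)),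
          nsmul_eq_mul, mul_assoc]

open Polynomial in
theorem Matrix.sum_principal_minors_mul_eq_choose {R m n : Type*} [CommRing R] [Fintype m]
    [Fintype n] [DecidableEq m] [DecidableEq n] {A : Matrix m n R} {C : Matrix n m R}
    (hAC : A * C = 1) (j : ℕ) :
    ∑ t ∈ univ.powersetCard j, ((C * A).submatrix (Subtype.val : t → n) Subtype.val).det =
      (Fintype.card m).choose j := by
  have hdet : det (1 + (X : R[X]) • (C * A).map Polynomial.C) = (1 + X) ^ Fintype.card m := by
    rw [Matrix.map_mul, ← smul_mul, det_one_add_mul_comm, Matrix.mul_smul, ← Matrix.map_mul, hAC,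
      Matrix.map_one _ Polynomial.C_0 Polynomial.C_1,
      show (1 : Matrix m m R[X]) + X • 1 = (1 + (X : R[X])) • 1 by rw [add_smul, one_smul],
      det_smul, det_one, mul_one]
  rw [← coeff_det_one_add_X_smul_eq_sum_minors, hdet, coeff_one_add_X_pow]

theorem conjTranspose_colSubmatrix_mul_colSubmatrix {m n : ℕ} (B : Matrix (Fin m) (Fin n) ℂ)
    (s : Finset (Fin n)) :
    (colSubmatrix B s)ᴴ * colSubmatrix B s = (Bᴴ * B).submatrix Subtype.val Subtype.val := by
  rw [submatrix_mul _ _ _ id _ Function.bijective_id, ← conjTranspose_submatrix]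
  rfl

theorem sum_det_smul_one_add_gram_colSubmatrix {m n : ℕ} {B : Matrix (Fin m) (Fin n) ℂ}
    (hB : B * Bᴴ = 1) (c : ℂ) (k : ℕ) :
    ∑ s ∈ univ.powersetCard k, (c • 1 + (colSubmatrix B s)ᴴ * colSubmatrix B s).det =
      ∑ j ∈ range (k + 1), c ^ (k - j) * (n - j).choose (k - j) * m.choose j := by
  simp only [conjTranspose_colSubmatrix_mul_colSubmatrix,
    sum_det_smul_one_add_principal_submatrix, sum_principal_minors_mul_eq_choose hB,
    Fintype.card_fin]

theorem Nat.choose_le_choose_mul_choose {m k j : ℕ} (hjk : j ≤ k) (hkm : k ≤ m) :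
    m.choose j ≤ m.choose k * k.choose j := by
  rw [Nat.choose_mul hjk]
  exact Nat.le_mul_of_pos_right _ (Nat.choose_pos (Nat.sub_le_sub_right hkm j))

theorem sum_pow_mul_choose_eq_one_add_pow {R : Type*} [CommSemiring R] (x : R) (n : ℕ) :
    ∑ a ∈ range (n + 1), x ^ a * n.choose a = (1 + x) ^ n := by
  simp [add_comm 1 x, add_pow]

theorem Finset.sum_mul_le_sum_mul_sum_of_subset {ι R : Type*} [CommSemiring R]
    [PartialOrder R] [IsOrderedRing R] {s t : Finset ι} {f g : ι → R} (hst : s ⊆ t)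
    (hf : ∀ i ∈ s, 0 ≤ f i) (hg : ∀ i ∈ t, 0 ≤ g i) :
    ∑ i ∈ s, f i * g i ≤ (∑ i ∈ s, f i) * ∑ i ∈ t, g i := by
  rw [sum_mul]
  exact sum_le_sum fun i hi => mul_le_mul_of_nonneg_left (single_le_sum hg (hst hi)) (hf i hi)

theorem choose_le_sum_pow_mul_choose_mul_choose {ε : ℝ} (hε : 0 ≤ ε) (n m k : ℕ) :
    (m.choose k : ℝ) ≤
      ∑ j ∈ range (k + 1), ε ^ (k - j) * (n - j).choose (k - j) * m.choose j := by
  refine le_of_eq_of_le ?_ (single_le_sum (fun j _ => by positivity) (self_mem_range_succ k))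
  simp

theorem sum_sq_pow_mul_choose_mul_choose_le {x : ℝ} (hx : 0 ≤ x) {n m k : ℕ} (hkm : k ≤ m)
    (hkn : k ≤ n) :
    ∑ j ∈ range (k + 1), (x ^ 2) ^ (k - j) * (n - j).choose (k - j) * m.choose j ≤
      m.choose k * (1 + x) ^ (n + k) := by
  have hterm : ∀ j ∈ range (k + 1), (x ^ 2) ^ (k - j) * (n - j).choose (k - j) * m.choose j ≤
      m.choose k * ((x ^ (k - j) * k.choose (k - j)) * (x ^ (k - j) * n.choose (k - j))) := by
    intro j hj
    have hjk : j ≤ k := Nat.lt_succ_iff.mp (mem_range.mp hj)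
    have hchoose : (n - j).choose (k - j) * m.choose j ≤
        m.choose k * (k.choose (k - j) * n.choose (k - j)) := by
      rw [Nat.choose_symm hjk]
      calc (n - j).choose (k - j) * m.choose j
          ≤ n.choose (k - j) * (m.choose k * k.choose j) :=
            Nat.mul_le_mul (Nat.choose_le_choose _ (Nat.sub_le n j))
              (Nat.choose_le_choose_mul_choose hjk hkm)
        _ = m.choose k * (k.choose j * n.choose (k - j)) := by ring
    calc (x ^ 2) ^ (k - j) * (n - j).choose (k - j) * m.choose j
        = x ^ (2 * (k - j)) * ((n - j).choose (k - j) * m.choose j : ℕ) := by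
          push_cast; ring
      _ ≤ x ^ (2 * (k - j)) * (m.choose k * (k.choose (k - j) * n.choose (k - j)) : ℕ) := by
          gcongr
      _ = _ := by push_cast; ring
  calc ∑ j ∈ range (k + 1), (x ^ 2) ^ (k - j) * (n - j).choose (k - j) * m.choose j
      ≤ m.choose k * ∑ a ∈ range (k + 1), (x ^ a * k.choose a) * (x ^ a * n.choose a) := by
        rw [mul_sum]
        conv_rhs => rw [← sum_range_reflect, Nat.add_sub_cancel]
        exact sum_le_sum hterm
    _ ≤ m.choose k * ((∑ a ∈ range (k + 1), x ^ a * k.choose a) *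
          ∑ a ∈ range (n + 1), x ^ a * n.choose a) := by
        gcongr
        exact sum_mul_le_sum_mul_sum_of_subset (range_subset_range.mpr (by omega))
          (fun _ _ => by positivity) (fun _ _ => by positivity)
    _ = m.choose k * (1 + x) ^ (n + k) := by
        rw [sum_pow_mul_choose_eq_one_add_pow, sum_pow_mul_choose_eq_one_add_pow, pow_add,
          mul_comm ((1 + x) ^ k)]

theorem sum_det_eps_add_conjTranspose_mul_submatrix_bounds_general
    (n m k : ℕ) (hkm : k ≤ m) (hmn : m ≤ n)
    (B : Matrix (Fin m) (Fin n) ℂ) (hB : B * Bᴴ = 1)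
    (ε : ℝ) (hε : 0 < ε) :
    (m.choose k : ℝ) ≤
        (∑ s ∈ Finset.univ.powersetCard k,
          ((ε : ℂ) • 1 + (colSubmatrix B s)ᴴ * colSubmatrix B s).det).re ∧
      (∑ s ∈ Finset.univ.powersetCard k,
          ((ε : ℂ) • 1 + (colSubmatrix B s)ᴴ * colSubmatrix B s).det).re ≤
        (m.choose k : ℝ) * (1 + Real.sqrt ε) ^ (n + k) := by
  have hsum : (∑ s ∈ Finset.univ.powersetCard k,
      ((ε : ℂ) • 1 + (colSubmatrix B s)ᴴ * colSubmatrix B s).det).re =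
        ∑ j ∈ range (k + 1), ε ^ (k - j) * (n - j).choose (k - j) * m.choose j := by
    rw [sum_det_smul_one_add_gram_colSubmatrix hB]
    norm_cast
  have hupper := sum_sq_pow_mul_choose_mul_choose_le (Real.sqrt_nonneg ε) hkm (hkm.trans hmn)
  rw [Real.sq_sqrt hε.le] at hupper
  rw [hsum]
  exact ⟨choose_le_sum_pow_mul_choose_mul_choose hε.le n m k, hupper⟩

/-- For `n ≥ m ≥ k ≥ 1` and an `m × n` complex matrix `B` with
`B Bᴴ = I`, for every `ε > 0` the sum over all `k`-element column subsets `s` of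
`det (ε • I + Bₛᴴ Bₛ)` (a positive real number for each `s`) is at least `C(m,k)` and at
most `C(m,k) (1 + √ε)^(n+k)`. -/
theorem sum_det_eps_add_conjTranspose_mul_submatrix_bounds
    (n m k : ℕ) (hk : 1 ≤ k) (hkm : k ≤ m) (hmn : m ≤ n)
    (B : Matrix (Fin m) (Fin n) ℂ) (hB : B * Bᴴ = 1)
    (ε : ℝ) (hε : 0 < ε) :
    (m.choose k : ℝ) ≤
        (∑ s ∈ Finset.univ.powersetCard k,
          ((ε : ℂ) • 1 + (colSubmatrix B s)ᴴ * colSubmatrix B s).det).re ∧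
      (∑ s ∈ Finset.univ.powersetCard k,
          ((ε : ℂ) • 1 + (colSubmatrix B s)ᴴ * colSubmatrix B s).det).re ≤
        (m.choose k : ℝ) * (1 + Real.sqrt ε) ^ (n + k) :=
  sum_det_eps_add_conjTranspose_mul_submatrix_bounds_general n m k hkm hmn B hB ε hε
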